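/- Let K, D, λ be positive integers with λ ∣ D, D ∣ (K - λ), and n := (K-λ)/D > 1. Over F₂ with K cyclically indexed messages, define the code symbols: (a) c_{i,j} = x_{i+(j-1)D} + x_{i+jD} for i = 1,…,D, j = 1,…,n-1; and (b) d_{r,t} = x_{K-λ+r} + x_{K-λ+r-λ} + ⋯ + x_{K-λ+r-tλ} for r = 1,…,λ and t = 1,…,D/λ. Then every receiver R_k with adjacent one-sided antidotes {x_{k+1},…,x_{k+D}} (mod K) can decode x_k from these code symbols. -/

import Mathlib

/-!
Put `y = x - x'`; by linearity it suffices to show that `y` vanishes at `k` whenever it vanishes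
on the antidotes `k+1, …, k+D` and on every code symbol. With `m = K - L = nD`, over `F₂` the
symbols (a) make `y` `D`-periodic on the positions `1, …, m`, the symbols (b) with `t = 1` give
`y (m + r) = y (m + r - L)`, and consecutive symbols (b) show that `y` vanishes on
`m - D + 1, …, m - L`. Take the representative of `k` in `1, …, K`. If `k ≤ m - D`,
periodicity moves `k` to the antidote `k + D`; if `k ≤ m - L`, `y k = 0` already; if `k ≤ m`,
(b) moves `k` to the antidote `k + L`; and if `k > m`, (b) followed by `n - 1` periods moves `k`
to `k + D - K`.
-/

open Finset

theorem apply_add_mul_eq_of_chain {α : Type*} {f : ℕ → α} {i D N : ℕ}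
    (h : ∀ j ∈ Icc 1 N, f (i + (j - 1) * D) = f (i + j * D)) :
    ∀ j ≤ N, f (i + j * D) = f i := by
  intro j
  induction j with
  | zero => simp
  | succ j ih =>
    intro hj
    rw [← h (j + 1) (mem_Icc.2 ⟨by omega, hj⟩), Nat.add_sub_cancel]
    exact ih (by omega)

theorem eq_zero_of_partial_sums_eq_zero {G : Type*} [AddCommGroup G] {g : ℕ → G} {c : ℕ}
    (h : ∀ t ∈ Icc 1 c, ∑ s ∈ range (t + 1), g s = 0) : ∀ t ∈ Icc 2 c, g t = 0 := by
  intro t ht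
  obtain ⟨ht2, htc⟩ := mem_Icc.1 ht
  obtain ⟨u, rfl⟩ : ∃ u, t = u + 1 := ⟨t - 1, by omega⟩
  rw [← sum_range_succ_sub_sum g, h _ (mem_Icc.2 ⟨by omega, htc⟩),
    h u (mem_Icc.2 ⟨by omega, by omega⟩), sub_zero]

theorem CharTwo.sub_eq_sub_of_add_eq_add {R : Type*} [CommRing R] [CharP R 2] {a b a' b' : R}
    (h : a + b = a' + b') : a - a' = b - b' := by
  linear_combination h + (b' - b) * CharTwo.two_eq_zero (R := R)

section Decoding

variable {α : Type*} {f : ℕ → α} {D L m n k : ℕ}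

theorem apply_eq_apply_add_of_blocks (hD : 0 < D) (hm : m = n * D)
    (hA : ∀ i ∈ Icc 1 D, ∀ j ≤ n - 1, f (i + j * D) = f i)
    (hk : 1 ≤ k) (hkm : k + D ≤ m) : f k = f (k + D) := by
  have hk' : k - 1 < (n - 1) * D := by rw [Nat.sub_mul, one_mul]; omega
  obtain ⟨i, hi, j, hj, rfl⟩ : ∃ i ∈ Icc 1 D, ∃ j < n - 1, k = i + j * D :=
    ⟨(k - 1) % D + 1, mem_Icc.2 ⟨by omega, Nat.mod_lt _ hD⟩, (k - 1) / D,
      (Nat.div_lt_iff_lt_mul hD).2 hk', by have := Nat.mod_add_div' (k - 1) D; omega⟩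
  rw [hA i hi j hj.le, add_assoc, ← Nat.succ_mul, hA i hi _ hj]

theorem apply_eq_apply_add_of_wrap (hn : 1 ≤ n) (hLD : L ≤ D) (hm : m = n * D)
    (hwrap : ∀ p, f (p + (m + L)) = f p)
    (hA : ∀ i ∈ Icc 1 D, ∀ j ≤ n - 1, f (i + j * D) = f i)
    (hB : ∀ r ∈ Icc 1 L, f (m + r) = f (m + r - L))
    (hkm : m < k) (hkK : k ≤ m + L) : f k = f (k + D) := by
  obtain ⟨r, hr, rfl⟩ : ∃ r ∈ Icc 1 L, k = m + r :=
    ⟨k - m, mem_Icc.2 ⟨by omega, by omega⟩, by omega⟩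
  have hnD : (n - 1) * D = n * D - D := by rw [Nat.sub_mul, one_mul]
  have hDn : D ≤ n * D := Nat.le_mul_of_pos_left D hn
  have hr' := mem_Icc.1 hr
  rw [hB r hr, show m + r - L = (D - L + r) + (n - 1) * D by omega,
    hA _ (mem_Icc.2 ⟨by omega, by omega⟩) _ le_rfl, ← hwrap]
  congr 1
  omega

variable [Zero α]

theorem apply_eq_zero_of_sub_mul_eq_zero (hL : 0 < L) (hLD : L ∣ D)
    (hB : ∀ r ∈ Icc 1 L, ∀ t ∈ Icc 2 (D / L), f (m + r - t * L) = 0)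
    (hkD : m < k + D) (hkL : k + L ≤ m) : f k = 0 := by
  have hDL := Nat.div_mul_cancel hLD
  have hq := Nat.div_add_mod' (m + L - k) L
  have hr := Nat.mod_lt (m + L - k) hL
  have ht2 : 2 ≤ (m + L - k) / L := (Nat.le_div_iff_mul_le hL).2 (by omega)
  have htc : (m + L - k) / L < D / L + 1 :=
    (Nat.div_lt_iff_lt_mul hL).2 (by rw [Nat.succ_mul]; omega)
  have := hB (L - (m + L - k) % L) (mem_Icc.2 ⟨by omega, by omega⟩) ((m + L - k) / L)
    (mem_Icc.2 ⟨ht2, by omega⟩)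
  rwa [show m + (L - (m + L - k) % L) - (m + L - k) / L * L = k by omega] at this

theorem apply_eq_zero_of_apply_add_eq_zero
    (hB : ∀ r ∈ Icc 1 L, f (m + r) = f (m + r - L))
    (hside : f (k + L) = 0) (hkL : m < k + L) (hkm : k ≤ m) : f k = 0 := by
  have := hB (k + L - m) (mem_Icc.2 ⟨by omega, by omega⟩)
  rwa [show m + (k + L - m) = k + L by omega, Nat.add_sub_cancel, hside, eq_comm] at this

theorem apply_eq_zero_of_antidotes (hD : 0 < D) (hL : 0 < L) (hLD : L ∣ D) (hn : 2 ≤ n)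
    (hm : m = n * D) (hwrap : ∀ p, f (p + (m + L)) = f p)
    (hA : ∀ i ∈ Icc 1 D, ∀ j ≤ n - 1, f (i + j * D) = f i)
    (hB₁ : ∀ r ∈ Icc 1 L, f (m + r) = f (m + r - L))
    (hB₂ : ∀ r ∈ Icc 1 L, ∀ t ∈ Icc 2 (D / L), f (m + r - t * L) = 0)
    (hk : 1 ≤ k) (hkK : k ≤ m + L) (hside : ∀ j ∈ Icc 1 D, f (k + j) = 0) : f k = 0 := by
  have hLD' : L ≤ D := Nat.le_of_dvd hD hLD
  have hside_D := hside D (mem_Icc.2 ⟨hD, le_rfl⟩)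
  rcases le_or_gt (k + D) m with h₁ | h₁
  · rwa [apply_eq_apply_add_of_blocks hD hm hA hk h₁]
  rcases le_or_gt (k + L) m with h₂ | h₂
  · exact apply_eq_zero_of_sub_mul_eq_zero hL hLD hB₂ h₁ h₂
  rcases le_or_gt k m with h₃ | h₃
  · exact apply_eq_zero_of_apply_add_eq_zero hB₁ (hside L (mem_Icc.2 ⟨hL, hLD'⟩)) h₂ h₃
  · rwa [apply_eq_apply_add_of_wrap (by omega) hLD' hm hwrap hA hB₁ h₃ hkK]

end Decoding

/-- with `L ∣ D`, `D ∣ (K - L)`, `n = (K-L)/D > 1`, the code consisting of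
(a) `x_{i+(j-1)D} + x_{i+jD}` for `i = 1,…,D`, `j = 1,…,n-1`, and
(b) `x_{K-L+r} + x_{K-L+r-L} + ⋯ + x_{K-L+r-tL}` for `r = 1,…,L`, `t = 1,…,D/L`,
lets receiver `R_k` with antidotes `{x_{k+1},…,x_{k+D}}` decode `x_k`. -/
theorem stmt_3 (K D L : ℕ) [NeZero K] (hD : 0 < D) (hL : 0 < L)
    (hLD : L ∣ D) (hdvd : D ∣ (K - L)) (hn : 1 < (K - L) / D)
    (k : ZMod K) (x x' : ZMod K → ZMod 2)
    (hside : ∀ j ∈ Finset.Icc 1 D, x (k + (j : ℕ)) = x' (k + (j : ℕ)))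
    (hcodeA : ∀ i ∈ Finset.Icc 1 D, ∀ j ∈ Finset.Icc 1 ((K - L) / D - 1),
      x ((i + (j - 1) * D : ℕ) : ZMod K) + x ((i + j * D : ℕ) : ZMod K)
        = x' ((i + (j - 1) * D : ℕ) : ZMod K) + x' ((i + j * D : ℕ) : ZMod K))
    (hcodeB : ∀ r ∈ Finset.Icc 1 L, ∀ t ∈ Finset.Icc 1 (D / L),
      ∑ s ∈ Finset.range (t + 1), x ((K - L + r - s * L : ℕ) : ZMod K)
        = ∑ s ∈ Finset.range (t + 1), x' ((K - L + r - s * L : ℕ) : ZMod K)) :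
    x k = x' k := by
  have hm : K - L = (K - L) / D * D := (Nat.div_mul_cancel hdvd).symm
  have hLK : L ≤ K := by
    have : 0 < (K - L) / D * D := Nat.mul_pos (by omega) hD
    omega
  set f : ℕ → ZMod 2 := fun p => (x - x') (p : ZMod K)
  have hk : (((k - 1).val + 1 : ℕ) : ZMod K) = k := by simp
  have hB (r : ℕ) (hr : r ∈ Icc 1 L) (t : ℕ) (ht : t ∈ Icc 1 (D / L)) :
      ∑ s ∈ range (t + 1), f (K - L + r - s * L) = 0 := by
    simp only [f, Pi.sub_apply, sum_sub_distrib, hcodeB r hr t ht, sub_self]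
  suffices f ((k - 1).val + 1) = 0 by simpa [f, hk, sub_eq_zero] using this
  refine apply_eq_zero_of_antidotes hD hL hLD hn hm (fun p => ?_) (fun i hi => ?_)
    (fun r hr => ?_) (fun r hr => ?_) (by omega) ?_ (fun j hj => ?_)
  · simp [f, Nat.sub_add_cancel hLK]
  · exact apply_add_mul_eq_of_chain fun j hj => CharTwo.sub_eq_sub_of_add_eq_add (hcodeA i hi j hj)
  · have := hB r hr 1 (mem_Icc.2 ⟨le_rfl, Nat.div_pos (Nat.le_of_dvd hD hLD) hL⟩)
    simpa [sum_range_succ, CharTwo.add_eq_zero] using this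
  · exact eq_zero_of_partial_sums_eq_zero (hB r hr)
  · have := ZMod.val_lt (k - 1); omega
  · simp [f, hk, hside j hj]
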